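/- arXiv:2512.09902 — 5 statements merged into one kernel-verified Lean document; each statement's English description precedes it below -/
import Mathlib

section
/- With r ≥ 0 and Q c ≥ 0 for all c, the MaxU link-sharing allocation γ̃ is feasible: 0 ≤ γ̃ c ≤ Q c for every commodity c, and Σ_{c ∈ ι} γ̃ c ≤ r. -/
open Finset

theorem sum_le_of_le_max_sub_sum_Iio {α : Type*} [LinearOrder α] [Fintype α]
    [LocallyFiniteOrderBot α] {r : ℝ} (hr : 0 ≤ r) {x : α → ℝ}
    (hx : ∀ k, x k ≤ max (r - ∑ m ∈ Iio k, x m) 0) :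
    ∑ k, x k ≤ r := by
  suffices h : ∀ s : Finset α, IsLowerSet (s : Set α) → ∑ k ∈ s, x k ≤ r from
    h univ (by simpa using isLowerSet_univ)
  intro s
  induction s using Finset.induction_on_max with
  | empty => simpa using fun _ => hr
  | insert a s hlt ih =>
    intro hlower
    have hs : s = Iio a := by
      ext m
      refine ⟨fun hm => mem_Iio.2 (hlt m hm), fun hm => ?_⟩
      have hm' : m ∈ insert a s := hlower (le_of_lt (mem_Iio.1 hm)) (mem_insert_self a s)
      exact (mem_insert.1 hm').resolve_left (ne_of_lt (mem_Iio.1 hm))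
    have hS : ∑ m ∈ Iio a, x m ≤ r := hs ▸ ih (hs ▸ by simpa using isLowerSet_Iio a)
    have hxa : x a ≤ r - ∑ m ∈ Iio a, x m := max_eq_left (sub_nonneg.2 hS) ▸ hx a
    rw [sum_insert fun ha => lt_irrefl a (hlt a ha), hs]
    linarith

theorem maxU_allocation_feasible_general
    {ι : Type*} [Fintype ι]
    (r : ℝ) (hr : 0 ≤ r)
    (Q U : ι → ℝ) (hQ : ∀ c, 0 ≤ Q c)
    (α : ι → ℝ) (hα : ∀ c, α c = if 0 < U c ∧ 0 < Q c then 1 else 0)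
    (σ : Fin (Fintype.card ι) ≃ ι)
    (γt : ι → ℝ) (ρ : Fin (Fintype.card ι) → ℝ)
    (hρ : ∀ k, ρ k = max (r - ∑ m ∈ Finset.Iio k, γt (σ m)) 0)
    (hγt : ∀ k, γt (σ k) = min (α (σ k) * ρ k) (Q (σ k))) :
    (∀ c, 0 ≤ γt c ∧ γt c ≤ Q c) ∧ ∑ c, γt c ≤ r := by
  have hα_mem : ∀ c, 0 ≤ α c ∧ α c ≤ 1 := fun c => by rw [hα c]; split_ifs <;> norm_num
  have hρ_nonneg : ∀ k, 0 ≤ ρ k := fun k => hρ k ▸ le_max_right _ _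
  have hγt_le_ρ : ∀ k, γt (σ k) ≤ ρ k := fun k =>
    hγt k ▸ (min_le_left _ _).trans (mul_le_of_le_one_left (hρ_nonneg k) (hα_mem _).2)
  refine ⟨fun c => ?_, ?_⟩
  · obtain ⟨k, rfl⟩ := σ.surjective c
    rw [hγt k]
    exact ⟨le_min (mul_nonneg (hα_mem _).1 (hρ_nonneg k)) (hQ _), min_le_right _ _⟩
  · rw [← σ.sum_comp]
    exact sum_le_of_le_max_sub_sum_Iio hr fun k => hρ k ▸ hγt_le_ρ k

/-- With `r ≥ 0` and `Q c ≥ 0` for all `c`, the MaxU link-sharing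
allocation `γt` (defined recursively along the antitone enumeration `σ` via the
residuals `ρ`) is feasible: `0 ≤ γt c ≤ Q c` for every commodity `c`, and
`∑ c, γt c ≤ r`. -/
theorem maxU_allocation_feasible
    {ι : Type*} [Fintype ι] [Nonempty ι]
    (r : ℝ) (hr : 0 ≤ r)
    (Q U : ι → ℝ) (hQ : ∀ c, 0 ≤ Q c)
    (α : ι → ℝ) (hα : ∀ c, α c = if 0 < U c ∧ 0 < Q c then 1 else 0)
    (σ : Fin (Fintype.card ι) ≃ ι)
    (hsort : Antitone fun k => α (σ k) * U (σ k))
    (γt : ι → ℝ) (ρ : Fin (Fintype.card ι) → ℝ)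
    (hρ : ∀ k, ρ k = max (r - ∑ m ∈ Finset.Iio k, γt (σ m)) 0)
    (hγt : ∀ k, γt (σ k) = min (α (σ k) * ρ k) (Q (σ k))) :
    (∀ c, 0 ≤ γt c ∧ γt c ≤ Q c) ∧ ∑ c, γt c ≤ r :=
  maxU_allocation_feasible_general r hr Q U hQ α hα σ γt ρ hρ hγt
end

section
/- The total rate assigned by the MaxU link-sharing allocation either saturates the link capacity or exhausts all eligible queues: Σ_{c ∈ ι} γ̃ c = min r (Σ_{c : U c > 0 ∧ Q c > 0} Q c). -/
/-!
Along the enumeration, the greedy rule keeps the invariant that the rate allocated to the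
first `k` commodities is `min r` of their total demand, where the demand of commodity `c` is
`α c * Q c`: one more step adds `min (residual) (demand)`, which is exactly the increment of
`min r (·)`. Ineligible commodities have demand `0`, so the final demand is the eligible backlog.
-/

open Finset

lemma min_add_min_max_sub_min {r T q : ℝ} (hq : 0 ≤ q) :
    min r T + min (max (r - min r T) 0) q = min r (T + q) := by
  rcases le_total T r with h | h
  · rw [min_eq_right h, max_eq_left (by linarith)]
    rcases le_total (r - T) q with h' | h'
    · rw [min_eq_left h', min_eq_left (by linarith : r ≤ T + q)]; ring
    · rw [min_eq_right h', min_eq_right (by linarith : T + q ≤ r)]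
  · rw [min_eq_left h, min_eq_left (by linarith : r ≤ T + q)]
    simp [hq]

theorem sum_range_eq_min_of_greedy {r : ℝ} (hr : 0 ≤ r) {d g : ℕ → ℝ} (hd : ∀ k, 0 ≤ d k)
    (hg : ∀ k, g k = min (max (r - ∑ m ∈ range k, g m) 0) (d k)) (k : ℕ) :
    ∑ m ∈ range k, g m = min r (∑ m ∈ range k, d m) := by
  induction k with
  | zero => simp [hr]
  | succ k ih =>
    rw [sum_range_succ, sum_range_succ, hg k, ih]
    exact min_add_min_max_sub_min (hd k)

theorem Fin.sum_eq_min_of_greedy {n : ℕ} {r : ℝ} (hr : 0 ≤ r) {d g : Fin n → ℝ}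
    (hd : ∀ k, 0 ≤ d k) (hg : ∀ k, g k = min (max (r - ∑ m ∈ Iio k, g m) 0) (d k)) :
    ∑ k, g k = min r (∑ k, d k) := by
  let zeroExt (f : Fin n → ℝ) (k : ℕ) : ℝ := if h : k < n then f ⟨k, h⟩ else 0
  have sum_Iio (f : Fin n → ℝ) (k : Fin n) : ∑ m ∈ Iio k, f m = ∑ m ∈ range k, zeroExt f m := by
    rw [← Nat.Iio_eq_range, ← Fin.map_valEmbedding_Iio, sum_map]
    exact sum_congr rfl fun m _ => by simp [zeroExt]
  have sum_univ (f : Fin n → ℝ) : ∑ m, f m = ∑ m ∈ range n, zeroExt f m := by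
    rw [← Fin.sum_univ_eq_sum_range]
    exact sum_congr rfl fun m _ => by simp [zeroExt]
  rw [sum_univ, sum_univ]
  refine sum_range_eq_min_of_greedy hr (fun k => ?_) (fun k => ?_) n
  · unfold zeroExt; split_ifs <;> simp [hd]
  · by_cases hk : k < n
    · simpa [zeroExt, hk, sum_Iio] using hg ⟨k, hk⟩
    · simp [zeroExt, hk]

lemma min_mul_eq_min_mul_of_eq_zero_or_eq_one {a ρ q : ℝ} (ha : a = 0 ∨ a = 1) (hρ : 0 ≤ ρ)
    (hq : 0 ≤ q) : min (a * ρ) q = min ρ (a * q) := by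
  rcases ha with rfl | rfl <;> simp [hρ, hq]

theorem maxU_total_rate_general
    {ι : Type*} [Fintype ι]
    (r : ℝ) (hr : 0 ≤ r)
    (Q U : ι → ℝ) (hQ : ∀ c, 0 ≤ Q c)
    (α : ι → ℝ) (hα : ∀ c, α c = if 0 < U c ∧ 0 < Q c then 1 else 0)
    (σ : Fin (Fintype.card ι) ≃ ι)
    (γt : ι → ℝ) (ρ : Fin (Fintype.card ι) → ℝ)
    (hρ : ∀ k, ρ k = max (r - ∑ m ∈ Finset.Iio k, γt (σ m)) 0)
    (hγt : ∀ k, γt (σ k) = min (α (σ k) * ρ k) (Q (σ k))) :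
    ∑ c, γt c = min r (∑ c ∈ Finset.univ.filter (fun c => 0 < U c ∧ 0 < Q c), Q c) := by
  have hα01 (c : ι) : α c = 0 ∨ α c = 1 := by
    rw [hα]; split_ifs <;> simp
  have hα_nonneg (c : ι) : 0 ≤ α c := by rcases hα01 c with h | h <;> simp [h]
  have hγ (k) : γt (σ k) = min (max (r - ∑ m ∈ Iio k, γt (σ m)) 0) (α (σ k) * Q (σ k)) := by
    rw [hγt, hρ, min_mul_eq_min_mul_of_eq_zero_or_eq_one (hα01 _) (le_max_right _ _) (hQ _)]
  rw [← σ.sum_comp, Fin.sum_eq_min_of_greedy hr (fun k => mul_nonneg (hα_nonneg _) (hQ _)) hγ,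
    σ.sum_comp (fun c => α c * Q c), sum_filter]
  simp [hα]

/-- The total rate assigned by the MaxU link-sharing allocation either
saturates the link capacity or exhausts all eligible queues:
`∑ c, γt c = min r (∑_{c : U c > 0 ∧ Q c > 0} Q c)`. -/
theorem maxU_total_rate
    {ι : Type*} [Fintype ι] [Nonempty ι]
    (r : ℝ) (hr : 0 ≤ r)
    (Q U : ι → ℝ) (hQ : ∀ c, 0 ≤ Q c)
    (α : ι → ℝ) (hα : ∀ c, α c = if 0 < U c ∧ 0 < Q c then 1 else 0)
    (σ : Fin (Fintype.card ι) ≃ ι)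
    (hsort : Antitone fun k => α (σ k) * U (σ k))
    (γt : ι → ℝ) (ρ : Fin (Fintype.card ι) → ℝ)
    (hρ : ∀ k, ρ k = max (r - ∑ m ∈ Finset.Iio k, γt (σ m)) 0)
    (hγt : ∀ k, γt (σ k) = min (α (σ k) * ρ k) (Q (σ k))) :
    ∑ c, γt c = min r (∑ c ∈ Finset.univ.filter (fun c => 0 < U c ∧ 0 < Q c), Q c) :=
  maxU_total_rate_general r hr Q U hQ α hα σ γt ρ hρ hγt
end

section
/- Per-link optimality of the MaxU allocation (fractional-knapsack optimality of the greedy link-sharing rule): for every rate assignment γ : ι → ℝ satisfying 0 ≤ γ c ≤ Q c for all c and Σ_{c ∈ ι} γ c ≤ r, one has Σ_{c ∈ ι} γ c * U c ≤ Σ_{c ∈ ι} γ̃ c * U c. -/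
/-!
Reorder the commodities by nonincreasing filtered pressure `α U` and replace a feasible `γ` by
`α γ`, which only increases its utility. Measured against the filtered capacities `α Q`, the
greedy allocation dominates every feasible allocation in all prefix sums: either it fills every
capacity up to a given position, or it has already spent the whole rate `r` by then. Abel
summation against the nonincreasing nonnegative weights `α U` turns prefix dominance into
dominance of the utilities.
-/

open Finset

section Abel

variable {κ R : Type*} [LinearOrder κ] [CommRing R] [LinearOrder R] [IsStrictOrderedRing R]

-- The lower bound `c` on the weights makes the statement stable under adding a new maximum.
theorem Finset.mul_sum_le_sum_mul_of_antitoneOn (s : Finset κ) {d w : κ → R}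
    (hw : AntitoneOn w s) (hd : ∀ k ∈ s, 0 ≤ ∑ m ∈ s with m ≤ k, d m)
    {c : R} (hc : ∀ k ∈ s, c ≤ w k) :
    c * ∑ k ∈ s, d k ≤ ∑ k ∈ s, d k * w k := by
  classical
  induction s using Finset.induction_on_max generalizing c with
  | empty => simp
  | insert M s hlt ih =>
    have hM : M ∉ s := fun h => lt_irrefl M (hlt M h)
    have hs : ∀ k ∈ s, ({m ∈ insert M s | m ≤ k} : Finset κ) = {m ∈ s | m ≤ k} := fun k hk => by
      rw [filter_insert, if_neg (not_le.2 (hlt k hk))]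
    have hwM : ∀ k ∈ s, w M ≤ w k := fun k hk =>
      hw (mem_insert_of_mem hk) (mem_insert_self M s) (hlt k hk).le
    have ih' : w M * ∑ k ∈ s, d k ≤ ∑ k ∈ s, d k * w k :=
      ih (hw.mono (subset_insert M s)) (fun k hk => hs k hk ▸ hd k (mem_insert_of_mem hk)) hwM
    have htotal : 0 ≤ ∑ k ∈ insert M s, d k := by
      simpa [filter_true_of_mem fun k hk => (mem_insert.1 hk).elim le_of_eq fun h => (hlt k h).le]
        using hd M (mem_insert_self M s)
    rw [sum_insert hM] at htotal
    rw [sum_insert hM, sum_insert hM]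
    calc c * (d M + ∑ k ∈ s, d k) ≤ w M * (d M + ∑ k ∈ s, d k) :=
          mul_le_mul_of_nonneg_right (hc M (mem_insert_self M s)) htotal
      _ ≤ d M * w M + ∑ k ∈ s, d k * w k := by linarith

variable [Fintype κ] [LocallyFiniteOrderBot κ]

theorem sum_mul_le_sum_mul_of_sum_Iic_le {a b w : κ → R} (hw : Antitone w) (hw0 : 0 ≤ w)
    (hab : ∀ k, ∑ m ∈ Iic k, a m ≤ ∑ m ∈ Iic k, b m) :
    ∑ k, a k * w k ≤ ∑ k, b k * w k := by
  have h := univ.mul_sum_le_sum_mul_of_antitoneOn (d := b - a) (hw.antitoneOn _)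
    (fun k _ => by simpa [filter_ge_eq_Iic, sum_sub_distrib] using hab k) (c := 0)
    (fun k _ => hw0 k)
  simpa [sub_mul, sum_sub_distrib] using h

end Abel

section Greedy

variable {κ R : Type*} [LinearOrder κ] [Fintype κ] [LocallyFiniteOrderBot κ]
  [AddCommGroup R] [LinearOrder R] [IsOrderedAddMonoid R]

theorem sum_Iic_le_sum_Iic_greedy {r : R} {t g f : κ → R} (ht : 0 ≤ t)
    (hg : ∀ k, g k = min (max (r - ∑ m ∈ Iio k, g m) 0) (t k)) (hf : 0 ≤ f)
    (hft : f ≤ t) (hfr : ∑ k, f k ≤ r) (k : κ) :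
    ∑ m ∈ Iic k, f m ≤ ∑ m ∈ Iic k, g m := by
  classical
  by_cases hsat : ∀ m ∈ Iic k, g m = t m
  · exact (sum_le_sum fun m _ => hft m).trans_eq (sum_congr rfl hsat).symm
  obtain ⟨m, hmk, hgmt⟩ : ∃ m ∈ Iic k, g m ≠ t m := by simpa using hsat
  -- below capacity at `m`, the greedy rule has used up the whole budget `r` by step `m`
  have hgm : g m = max (r - ∑ i ∈ Iio m, g i) 0 := by
    rcases min_choice (max (r - ∑ i ∈ Iio m, g i) 0) (t m) with h | h
    · exact (hg m).trans h
    · exact absurd ((hg m).trans h) hgmt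
  have hg0 : 0 ≤ g := fun i => hg i ▸ le_min (le_max_right _ _) (ht i)
  calc ∑ i ∈ Iic k, f i ≤ ∑ i, f i := sum_le_univ_sum_of_nonneg hf
    _ ≤ r := hfr
    _ ≤ ∑ i ∈ Iic m, g i := by
        rw [← Iio_insert, sum_insert notMem_Iio_self, hgm]
        exact sub_le_iff_le_add.1 (le_max_left _ _)
    _ ≤ ∑ i ∈ Iic k, g i :=
        sum_le_sum_of_subset_of_nonneg (Iic_subset_Iic.2 (mem_Iic.1 hmk)) fun i _ _ => hg0 i

theorem sum_mul_le_sum_mul_greedy {R : Type*} [CommRing R] [LinearOrder R] [IsStrictOrderedRing R]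
    {r : R} {t g f w : κ → R} (hw : Antitone w) (hw0 : 0 ≤ w) (ht : 0 ≤ t)
    (hg : ∀ k, g k = min (max (r - ∑ m ∈ Iio k, g m) 0) (t k)) (hf : 0 ≤ f)
    (hft : f ≤ t) (hfr : ∑ k, f k ≤ r) :
    ∑ k, f k * w k ≤ ∑ k, g k * w k :=
  sum_mul_le_sum_mul_of_sum_Iic_le hw hw0 (sum_Iic_le_sum_Iic_greedy ht hg hf hft hfr)

end Greedy

section Filter

variable {a u q : ℝ}

theorem filter_mul_nonneg (ha : a = if 0 < u ∧ 0 < q then 1 else 0) : 0 ≤ a * u := by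
  subst ha
  split_ifs with h
  · simpa using h.1.le
  · simp

theorem mul_le_filter_mul_filter_mul (ha : a = if 0 < u ∧ 0 < q then 1 else 0) {x : ℝ}
    (hx : 0 ≤ x) (hxq : x ≤ q) : x * u ≤ a * x * (a * u) := by
  subst ha
  split_ifs with h
  · simp
  · rcases not_and_or.1 h with hu | hq
    · simpa using mul_nonpos_of_nonneg_of_nonpos hx (not_lt.1 hu)
    · simp [le_antisymm (hxq.trans (not_lt.1 hq)) hx]

theorem min_mul_eq_min_mul (ha : a = 1 ∨ a = 0) {ρ : ℝ} (hρ : 0 ≤ ρ) (hq : 0 ≤ q) :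
    min (a * ρ) q = min ρ (a * q) := by
  rcases ha with rfl | rfl <;> simp [hρ, hq]

theorem min_mul_mul_eq (ha : a = 1 ∨ a = 0) {ρ : ℝ} (hq : 0 ≤ q) :
    min (a * ρ) q * (a * u) = min (a * ρ) q * u := by
  rcases ha with rfl | rfl <;> simp [hq]

end Filter

theorem maxU_per_link_optimal_general
    {ι : Type*} [Fintype ι]
    (r : ℝ)
    (Q U : ι → ℝ) (hQ : ∀ c, 0 ≤ Q c)
    (α : ι → ℝ) (hα : ∀ c, α c = if 0 < U c ∧ 0 < Q c then 1 else 0)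
    (σ : Fin (Fintype.card ι) ≃ ι)
    (hsort : Antitone fun k => α (σ k) * U (σ k))
    (γt : ι → ℝ) (ρ : Fin (Fintype.card ι) → ℝ)
    (hρ : ∀ k, ρ k = max (r - ∑ m ∈ Finset.Iio k, γt (σ m)) 0)
    (hγt : ∀ k, γt (σ k) = min (α (σ k) * ρ k) (Q (σ k))) :
    ∀ γ : ι → ℝ, (∀ c, 0 ≤ γ c ∧ γ c ≤ Q c) → ∑ c, γ c ≤ r →
      ∑ c, γ c * U c ≤ ∑ c, γt c * U c := by
  intro γ hγ hγr
  have hα01 : ∀ c, α c = 1 ∨ α c = 0 := fun c => hα c ▸ ite_eq_or_eq _ _ _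
  have hα0 : ∀ c, 0 ≤ α c := fun c => (hα01 c).elim (· ▸ zero_le_one) (·.ge)
  have hα1 : ∀ c, α c ≤ 1 := fun c => (hα01 c).elim (·.le) (· ▸ zero_le_one)
  have hknapsack := sum_mul_le_sum_mul_greedy (r := r) (w := fun k => α (σ k) * U (σ k))
    (t := fun k => α (σ k) * Q (σ k)) (g := fun k => γt (σ k))
    (f := fun k => α (σ k) * γ (σ k)) hsort (fun k => filter_mul_nonneg (hα _))
    (fun k => mul_nonneg (hα0 _) (hQ _))
    (fun k => by rw [hγt, hρ, min_mul_eq_min_mul (hα01 _) (le_max_right _ _) (hQ _)])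
    (fun k => mul_nonneg (hα0 _) (hγ _).1) (fun k => mul_le_mul_of_nonneg_left (hγ _).2 (hα0 _))
    ((Equiv.sum_comp σ fun c => α c * γ c).trans_le
      ((sum_le_sum fun c _ => mul_le_of_le_one_left (hγ c).1 (hα1 c)).trans hγr))
  calc ∑ c, γ c * U c ≤ ∑ c, α c * γ c * (α c * U c) :=
        sum_le_sum fun c _ => mul_le_filter_mul_filter_mul (hα c) (hγ c).1 (hγ c).2
    _ = ∑ k, α (σ k) * γ (σ k) * (α (σ k) * U (σ k)) := (Equiv.sum_comp σ _).symm
    _ ≤ ∑ k, γt (σ k) * (α (σ k) * U (σ k)) := hknapsack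
    _ = ∑ k, γt (σ k) * U (σ k) :=
        sum_congr rfl fun k _ => by rw [hγt k, min_mul_mul_eq (hα01 _) (hQ _)]
    _ = ∑ c, γt c * U c := Equiv.sum_comp σ fun c => γt c * U c

/-- Per-link optimality of the MaxU allocation (fractional-knapsack
optimality of the greedy link-sharing rule): for every rate assignment `γ` satisfying
`0 ≤ γ c ≤ Q c` for all `c` and `∑ c, γ c ≤ r`, one has
`∑ c, γ c * U c ≤ ∑ c, γt c * U c`. -/
theorem maxU_per_link_optimal
    {ι : Type*} [Fintype ι] [Nonempty ι]
    (r : ℝ) (hr : 0 ≤ r)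
    (Q U : ι → ℝ) (hQ : ∀ c, 0 ≤ Q c)
    (α : ι → ℝ) (hα : ∀ c, α c = if 0 < U c ∧ 0 < Q c then 1 else 0)
    (σ : Fin (Fintype.card ι) ≃ ι)
    (hsort : Antitone fun k => α (σ k) * U (σ k))
    (γt : ι → ℝ) (ρ : Fin (Fintype.card ι) → ℝ)
    (hρ : ∀ k, ρ k = max (r - ∑ m ∈ Finset.Iio k, γt (σ m)) 0)
    (hγt : ∀ k, γt (σ k) = min (α (σ k) * ρ k) (Q (σ k))) :
    ∀ γ : ι → ℝ, (∀ c, 0 ≤ γ c ∧ γ c ≤ Q c) → ∑ c, γ c ≤ r →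
      ∑ c, γ c * U c ≤ ∑ c, γt c * U c :=
  maxU_per_link_optimal_general r Q U hQ α hα σ hsort γt ρ hρ hγt
end

section
/- Per-link utility dominance of MaxU over classic SP-BP: suppose the maximizer c* of U is the first element of the MaxU enumeration (σ 0 = c*). Then the link utility of the MaxU allocation is at least that of the classic exclusive allocation: Σ_{c ∈ ι} γ̃ c * max (U c) 0 ≥ Σ_{c ∈ ι} γ̂ c * max (U c) 0. -/
/-! The classic allocation is supported on `cstar` alone. Since `cstar` comes first in the
MaxU enumeration, it meets the full residual `r`, so MaxU gives it `min r (Q cstar)` as well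
whenever `U cstar > 0`; every other MaxU term only adds nonnegative utility. -/

theorem Finset.sum_le_sum_of_eq_zero_off {ι M : Type*} [Fintype ι] [AddCommMonoid M]
    [PartialOrder M] [IsOrderedAddMonoid M] {f g : ι → M} (a : ι)
    (hf : ∀ c, c ≠ a → f c = 0) (hfa : f a ≤ g a) (hg : ∀ c, 0 ≤ g c) :
    ∑ c, f c ≤ ∑ c, g c :=
  calc ∑ c, f c = f a := Finset.sum_eq_single a (fun c _ hc => hf c hc) (by simp)
    _ ≤ g a := hfa
    _ ≤ ∑ c, g c := Finset.single_le_sum (fun c _ => hg c) (Finset.mem_univ a)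

lemma Fin.Iio_mk_zero {n : ℕ} (hn : 0 < n) : Finset.Iio (⟨0, hn⟩ : Fin n) = ∅ :=
  Finset.Iio_eq_empty.mpr fun _ _ => Nat.zero_le _

lemma min_ite_mul_eq_min {r q u : ℝ} (hr : 0 ≤ r) (hq : 0 ≤ q) (hu : 0 < u) :
    min ((if 0 < u ∧ 0 < q then 1 else 0) * r) q = min r q := by
  rcases hq.lt_or_eq with hq | rfl
  · simp [hu, hq]
  · simp [min_eq_right hr]

lemma greedy_alloc_nonneg {n : ℕ} {ι : Type*} (σ : Fin n ≃ ι) {α Q γ : ι → ℝ}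
    {ρ : Fin n → ℝ} (hα : ∀ c, 0 ≤ α c) (hρ : ∀ k, 0 ≤ ρ k) (hQ : ∀ c, 0 ≤ Q c)
    (hγ : ∀ k, γ (σ k) = min (α (σ k) * ρ k) (Q (σ k))) (c : ι) : 0 ≤ γ c := by
  obtain ⟨k, rfl⟩ := σ.surjective c
  rw [hγ]
  exact le_min (mul_nonneg (hα _) (hρ k)) (hQ _)

theorem maxU_utility_dominates_classic_general
    {ι : Type*} [Fintype ι] [Nonempty ι] [DecidableEq ι]
    (r : ℝ) (hr : 0 ≤ r)
    (Q U : ι → ℝ) (hQ : ∀ c, 0 ≤ Q c)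
    (cstar : ι)
    (γh : ι → ℝ)
    (hγh : ∀ c, γh c = if c = cstar ∧ 0 < U cstar then min r (Q c) else 0)
    (α : ι → ℝ) (hα : ∀ c, α c = if 0 < U c ∧ 0 < Q c then 1 else 0)
    (σ : Fin (Fintype.card ι) ≃ ι)
    (γt : ι → ℝ) (ρ : Fin (Fintype.card ι) → ℝ)
    (hρ : ∀ k, ρ k = max (r - ∑ m ∈ Finset.Iio k, γt (σ m)) 0)
    (hγt : ∀ k, γt (σ k) = min (α (σ k) * ρ k) (Q (σ k)))
    (h0 : σ ⟨0, Fintype.card_pos⟩ = cstar) :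
    ∑ c, γh c * max (U c) 0 ≤ ∑ c, γt c * max (U c) 0 := by
  have hρ_first : ρ ⟨0, Fintype.card_pos⟩ = r := by
    rw [hρ, Fin.Iio_mk_zero, Finset.sum_empty, sub_zero, max_eq_left hr]
  have hγt_nonneg : ∀ c, 0 ≤ γt c :=
    greedy_alloc_nonneg σ (fun c => by rw [hα]; split_ifs <;> norm_num)
      (fun k => hρ k ▸ le_max_right _ _) hQ hγt
  refine Finset.sum_le_sum_of_eq_zero_off cstar (fun c hc => by simp [hγh, hc]) ?_
    (fun c => mul_nonneg (hγt_nonneg c) (le_max_right _ _))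
  rcases le_or_gt (U cstar) 0 with hU | hU
  · simp [max_eq_right hU]
  · rw [hγh, if_pos ⟨rfl, hU⟩, ← h0, hγt, hρ_first, hα, h0,
      min_ite_mul_eq_min hr (hQ cstar) hU]

/-- Per-link utility dominance of MaxU over classic SP-BP: if the
maximizer `cstar` of `U` is the first element of the MaxU enumeration (`σ 0 = cstar`),
then the link utility of the MaxU allocation is at least that of the classic exclusive
allocation: `∑ c, γt c * max (U c) 0 ≥ ∑ c, γh c * max (U c) 0`. -/
theorem maxU_utility_dominates_classic
    {ι : Type*} [Fintype ι] [Nonempty ι] [DecidableEq ι]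
    (r : ℝ) (hr : 0 ≤ r)
    (Q U : ι → ℝ) (hQ : ∀ c, 0 ≤ Q c)
    (cstar : ι) (hcstar : ∀ c, U c ≤ U cstar)
    (γh : ι → ℝ)
    (hγh : ∀ c, γh c = if c = cstar ∧ 0 < U cstar then min r (Q c) else 0)
    (α : ι → ℝ) (hα : ∀ c, α c = if 0 < U c ∧ 0 < Q c then 1 else 0)
    (σ : Fin (Fintype.card ι) ≃ ι)
    (hsort : Antitone fun k => α (σ k) * U (σ k))
    (γt : ι → ℝ) (ρ : Fin (Fintype.card ι) → ℝ)
    (hρ : ∀ k, ρ k = max (r - ∑ m ∈ Finset.Iio k, γt (σ m)) 0)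
    (hγt : ∀ k, γt (σ k) = min (α (σ k) * ρ k) (Q (σ k)))
    (h0 : σ ⟨0, Fintype.card_pos⟩ = cstar) :
    ∑ c, γh c * max (U c) 0 ≤ ∑ c, γt c * max (U c) 0 :=
  maxU_utility_dominates_classic_general r hr Q U hQ cstar γh hγh α hα σ γt ρ hρ hγt h0
end

section
/- Deterministic single-slot objective dominance of MaxU SP-BP over classic SP-BP (core of Theorem 1): for each link e, suppose σ_e 0 = c*_e, and set ŵ e = Σ_{c ∈ ι} γ̂_e c * max (U_e c) 0 and w̃ e = Σ_{c ∈ ι} γ̃_e c * max (U_e c) 0. Let Ŝ be an independent set of G maximizing Σ_{e ∈ S} ŵ e over independent sets S, and let S̃ be an independent set maximizing Σ_{e ∈ S} w̃ e. Then the final MaxU rate assignments μ̃_e c = γ̃_e c (for e ∈ S̃, else 0) and classic assignments μ̂_e c = γ̂_e c (for e ∈ Ŝ, else 0) satisfy Σ_{e ∈ E} Σ_{c ∈ ι} μ̃_e c * U_e c ≥ Σ_{e ∈ E} Σ_{c ∈ ι} μ̂_e c * U_e c. -/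
/-!
On every link the classic weight is `γ̂(c*) · U⁺(c*)`, while MaxU serves `c* = σ 0` first with the
whole rate, so `γ̃(c*) ≥ γ̂(c*)` and the MaxU weight dominates the classic one link by link. Both
allocations vanish on commodities of nonpositive pressure, so each objective is the weight of its
schedule; hence the classic schedule scores at most its MaxU weight, which the MaxWeight schedule `S̃`
bounds.
-/

lemma mul_eq_mul_max_zero {γ u : ℝ} (h : u ≤ 0 → γ = 0) : γ * u = γ * max u 0 := by
  rcases le_or_gt u 0 with hu | hu
  · simp [h hu]
  · rw [max_eq_left hu.le]

lemma sum_sum_mul_eq_sum_weight {E ι : Type*} [Fintype E] [DecidableEq E] [Fintype ι]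
    (S : Finset E) (γ μ U : E → ι → ℝ) (w : E → ℝ)
    (hγ : ∀ e c, U e c ≤ 0 → γ e c = 0)
    (hμ : ∀ e c, μ e c = if e ∈ S then γ e c else 0)
    (hw : ∀ e, w e = ∑ c, γ e c * max (U e c) 0) :
    ∑ e, ∑ c, μ e c * U e c = ∑ e ∈ S, w e := by
  simp only [hμ, ite_mul, zero_mul, Finset.sum_ite_irrel, Finset.sum_const_zero,
    Finset.sum_ite_mem, Finset.univ_inter]
  refine Finset.sum_congr rfl fun e _ => ?_
  rw [hw]
  exact Finset.sum_congr rfl fun c _ => mul_eq_mul_max_zero (hγ e c)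

section Link

variable {ι : Type*} {n : ℕ} {r : ℝ} {Q U α : ι → ℝ} {σ : Fin n ≃ ι} {ρ : Fin n → ℝ}

lemma maxU_nonneg {γ : ι → ℝ} (hγ : ∀ k, γ (σ k) = min (α (σ k) * ρ k) (Q (σ k)))
    (hQ : ∀ c, 0 ≤ Q c) (hα : ∀ c, 0 ≤ α c) (hρ : ∀ k, 0 ≤ ρ k) (c : ι) :
    0 ≤ γ c := by
  rw [← σ.apply_symm_apply c, hγ]
  exact le_min (mul_nonneg (hα _) (hρ _)) (hQ _)

lemma maxU_eq_zero_of_alpha_eq_zero {γ : ι → ℝ}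
    (hγ : ∀ k, γ (σ k) = min (α (σ k) * ρ k) (Q (σ k)))
    (hQ : ∀ c, 0 ≤ Q c) {c : ι} (hc : α c = 0) : γ c = 0 := by
  rw [← σ.apply_symm_apply c, hγ, σ.apply_symm_apply, hc, zero_mul]
  exact min_eq_left (hQ c)

lemma maxU_apply_of_isMin {γ : ι → ℝ} (hγ : ∀ k, γ (σ k) = min (α (σ k) * ρ k) (Q (σ k)))
    (hr : 0 ≤ r) (hρ : ∀ k, ρ k = max (r - ∑ m ∈ Finset.Iio k, γ (σ m)) 0)
    {k : Fin n} (hk : IsMin k) :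
    γ (σ k) = min (α (σ k) * r) (Q (σ k)) := by
  rw [hγ, hρ, Finset.Iio_eq_empty.mpr hk, Finset.sum_empty, sub_zero, max_eq_left hr]

variable [DecidableEq ι] {cstar : ι}

lemma classic_eq_zero_of_nonpos {γ : ι → ℝ}
    (hγ : ∀ c, γ c = if c = cstar ∧ 0 < U cstar then min r (Q c) else 0)
    {c : ι} (hc : U c ≤ 0) : γ c = 0 := by
  rw [hγ, if_neg]
  rintro ⟨rfl, hpos⟩
  exact hc.not_gt hpos

lemma classic_weight_eq [Fintype ι] {γ : ι → ℝ}
    (hγ : ∀ c, γ c = if c = cstar ∧ 0 < U cstar then min r (Q c) else 0) :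
    ∑ c, γ c * max (U c) 0 = γ cstar * max (U cstar) 0 :=
  Finset.sum_eq_single cstar (fun c _ hc => by rw [hγ, if_neg fun h => hc h.1, zero_mul])
    (fun h => absurd (Finset.mem_univ _) h)

lemma classic_le_maxU_first {γh γt : ι → ℝ} (hr : 0 ≤ r) (hQ : ∀ c, 0 ≤ Q c)
    (hγh : ∀ c, γh c = if c = cstar ∧ 0 < U cstar then min r (Q c) else 0)
    (hα : ∀ c, α c = if 0 < U c ∧ 0 < Q c then 1 else 0)
    (hρ : ∀ k, ρ k = max (r - ∑ m ∈ Finset.Iio k, γt (σ m)) 0)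
    (hγt : ∀ k, γt (σ k) = min (α (σ k) * ρ k) (Q (σ k)))
    {k : Fin n} (hk : IsMin k) (hσk : σ k = cstar) (hγt_nonneg : 0 ≤ γt cstar) :
    γh cstar ≤ γt cstar := by
  by_cases hU : 0 < U cstar
  · rw [hγh, if_pos ⟨rfl, hU⟩]
    rcases (hQ cstar).eq_or_lt with hQ0 | hQpos
    · rwa [← hQ0, min_eq_right hr]
    · rw [← hσk, maxU_apply_of_isMin hγt hr hρ hk, hσk, hα, if_pos ⟨hU, hQpos⟩, one_mul]
  · rwa [hγh, if_neg fun h => hU h.2]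

lemma classic_weight_le_maxU_weight [Fintype ι] {γh γt : ι → ℝ} (hr : 0 ≤ r)
    (hQ : ∀ c, 0 ≤ Q c)
    (hγh : ∀ c, γh c = if c = cstar ∧ 0 < U cstar then min r (Q c) else 0)
    (hα : ∀ c, α c = if 0 < U c ∧ 0 < Q c then 1 else 0)
    (hρ : ∀ k, ρ k = max (r - ∑ m ∈ Finset.Iio k, γt (σ m)) 0)
    (hγt : ∀ k, γt (σ k) = min (α (σ k) * ρ k) (Q (σ k)))
    {k : Fin n} (hk : IsMin k) (hσk : σ k = cstar) :
    ∑ c, γh c * max (U c) 0 ≤ ∑ c, γt c * max (U c) 0 := by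
  have hγt_nonneg : ∀ c, 0 ≤ γt c :=
    maxU_nonneg hγt hQ (fun c => by rw [hα]; split_ifs <;> norm_num)
      (fun k => hρ k ▸ le_max_right _ _)
  rw [classic_weight_eq hγh]
  calc γh cstar * max (U cstar) 0
      ≤ γt cstar * max (U cstar) 0 :=
        mul_le_mul_of_nonneg_right
          (classic_le_maxU_first hr hQ hγh hα hρ hγt hk hσk (hγt_nonneg cstar))
          (le_max_right _ _)
    _ ≤ ∑ c, γt c * max (U c) 0 :=
        Finset.single_le_sum (fun c _ => mul_nonneg (hγt_nonneg c) (le_max_right _ _))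
          (Finset.mem_univ _)

end Link

theorem maxU_SPBP_objective_dominates_classic_general
    {E ι : Type*} [Fintype E] [DecidableEq E] [Fintype ι] [Nonempty ι] [DecidableEq ι]
    (G : SimpleGraph E)
    (r : E → ℝ) (hr : ∀ e, 0 ≤ r e)
    (Q U : E → ι → ℝ) (hQ : ∀ e c, 0 ≤ Q e c)
    (cstar : E → ι)
    (γh : E → ι → ℝ)
    (hγh : ∀ e c, γh e c =
      if c = cstar e ∧ 0 < U e (cstar e) then min (r e) (Q e c) else 0)
    (α : E → ι → ℝ) (hα : ∀ e c, α e c = if 0 < U e c ∧ 0 < Q e c then 1 else 0)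
    (σ : E → (Fin (Fintype.card ι) ≃ ι))
    (h0 : ∀ e, σ e ⟨0, Fintype.card_pos⟩ = cstar e)
    (γt : E → ι → ℝ) (ρ : E → Fin (Fintype.card ι) → ℝ)
    (hρ : ∀ e k, ρ e k = max (r e - ∑ m ∈ Finset.Iio k, γt e (σ e m)) 0)
    (hγt : ∀ e k, γt e (σ e k) = min (α e (σ e k) * ρ e k) (Q e (σ e k)))
    (wh wt : E → ℝ)
    (hwh : ∀ e, wh e = ∑ c, γh e c * max (U e c) 0)
    (hwt : ∀ e, wt e = ∑ c, γt e c * max (U e c) 0)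
    (Sh St : Finset E)
    (hShInd : ∀ a ∈ Sh, ∀ b ∈ Sh, ¬ G.Adj a b)
    (hStMax : ∀ S : Finset E, (∀ a ∈ S, ∀ b ∈ S, ¬ G.Adj a b) →
      ∑ e ∈ S, wt e ≤ ∑ e ∈ St, wt e)
    (μt μh : E → ι → ℝ)
    (hμt : ∀ e c, μt e c = if e ∈ St then γt e c else 0)
    (hμh : ∀ e c, μh e c = if e ∈ Sh then γh e c else 0) :
    ∑ e, ∑ c, μh e c * U e c ≤ ∑ e, ∑ c, μt e c * U e c := by
  have hγh_zero : ∀ e c, U e c ≤ 0 → γh e c = 0 := fun e _ =>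
    classic_eq_zero_of_nonpos (hγh e)
  have hγt_zero : ∀ e c, U e c ≤ 0 → γt e c = 0 := fun e c hc =>
    maxU_eq_zero_of_alpha_eq_zero (hγt e) (hQ e) (by rw [hα, if_neg fun h => hc.not_gt h.1])
  have hw : ∀ e, wh e ≤ wt e := fun e => by
    rw [hwh, hwt]
    exact classic_weight_le_maxU_weight (hr e) (hQ e) (hγh e) (hα e) (hρ e) (hγt e)
      (fun _ _ => Nat.zero_le _) (h0 e)
  rw [sum_sum_mul_eq_sum_weight Sh γh μh U wh hγh_zero hμh hwh,
    sum_sum_mul_eq_sum_weight St γt μt U wt hγt_zero hμt hwt]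
  exact (Finset.sum_le_sum fun e _ => hw e).trans (hStMax Sh hShInd)

/-- Deterministic single-slot objective dominance of MaxU SP-BP over
classic SP-BP (core of Theorem 1): for each link `e`, suppose the per-link maximizer
`cstar e` of `U e` is the first element of the MaxU enumeration `σ e`, and set
`wh e = ∑ c, γh e c * max (U e c) 0` and `wt e = ∑ c, γt e c * max (U e c) 0`.
Let `Sh` be an independent set of the conflict graph `G` maximizing `∑ e ∈ S, wh e`
over independent sets `S`, and let `St` be an independent set maximizing
`∑ e ∈ S, wt e`. Then the final MaxU rate assignments `μt e c = γt e c` (for `e ∈ St`,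
else `0`) and classic assignments `μh e c = γh e c` (for `e ∈ Sh`, else `0`) satisfy
`∑ e, ∑ c, μt e c * U e c ≥ ∑ e, ∑ c, μh e c * U e c`. -/
theorem maxU_SPBP_objective_dominates_classic
    {E ι : Type*} [Fintype E] [DecidableEq E] [Fintype ι] [Nonempty ι] [DecidableEq ι]
    (G : SimpleGraph E)
    (r : E → ℝ) (hr : ∀ e, 0 ≤ r e)
    (Q U : E → ι → ℝ) (hQ : ∀ e c, 0 ≤ Q e c)
    (cstar : E → ι) (hcstar : ∀ e c, U e c ≤ U e (cstar e))
    (γh : E → ι → ℝ)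
    (hγh : ∀ e c, γh e c =
      if c = cstar e ∧ 0 < U e (cstar e) then min (r e) (Q e c) else 0)
    (α : E → ι → ℝ) (hα : ∀ e c, α e c = if 0 < U e c ∧ 0 < Q e c then 1 else 0)
    (σ : E → (Fin (Fintype.card ι) ≃ ι))
    (hsort : ∀ e, Antitone fun k => α e (σ e k) * U e (σ e k))
    (h0 : ∀ e, σ e ⟨0, Fintype.card_pos⟩ = cstar e)
    (γt : E → ι → ℝ) (ρ : E → Fin (Fintype.card ι) → ℝ)
    (hρ : ∀ e k, ρ e k = max (r e - ∑ m ∈ Finset.Iio k, γt e (σ e m)) 0)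
    (hγt : ∀ e k, γt e (σ e k) = min (α e (σ e k) * ρ e k) (Q e (σ e k)))
    (wh wt : E → ℝ)
    (hwh : ∀ e, wh e = ∑ c, γh e c * max (U e c) 0)
    (hwt : ∀ e, wt e = ∑ c, γt e c * max (U e c) 0)
    (Sh St : Finset E)
    (hShInd : ∀ a ∈ Sh, ∀ b ∈ Sh, ¬ G.Adj a b)
    (hStInd : ∀ a ∈ St, ∀ b ∈ St, ¬ G.Adj a b)
    (hShMax : ∀ S : Finset E, (∀ a ∈ S, ∀ b ∈ S, ¬ G.Adj a b) →
      ∑ e ∈ S, wh e ≤ ∑ e ∈ Sh, wh e)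
    (hStMax : ∀ S : Finset E, (∀ a ∈ S, ∀ b ∈ S, ¬ G.Adj a b) →
      ∑ e ∈ S, wt e ≤ ∑ e ∈ St, wt e)
    (μt μh : E → ι → ℝ)
    (hμt : ∀ e c, μt e c = if e ∈ St then γt e c else 0)
    (hμh : ∀ e c, μh e c = if e ∈ Sh then γh e c else 0) :
    ∑ e, ∑ c, μh e c * U e c ≤ ∑ e, ∑ c, μt e c * U e c :=
  maxU_SPBP_objective_dominates_classic_general G r hr Q U hQ cstar γh hγh α hα σ h0 γt ρ hρ hγt wh
    wt hwh hwt Sh St hShInd hStMax μt μh hμt hμh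
end
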